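/- Let ξ > 0, let E be the Euclidean space ℝ³ (EuclideanSpace ℝ (Fin 3)), and define z : E → E by z(v) = v / √(1 + ‖v‖²/ξ²). Then z is differentiable everywhere on E, and its Fréchet derivative at each v ∈ E is the linear map x ↦ ((ξ² + ‖v‖²)·x − ⟨v, x⟩·v) / (ξ²·(1 + ‖v‖²/ξ²)^(3/2)). -/

import Mathlib

/-!
The map is `v ↦ φ(‖v‖²) • v` with `φ t = (√(1 + t/ξ²))⁻¹`, so the product and chain rules give
the derivative `φ(‖v‖²) • id + 2 φ'(‖v‖²) • ⟪v, ·⟫ v`. Since `φ' t = -(2ξ² a √a)⁻¹` with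
`a = 1 + t/ξ²`, and `ξ² + ‖v‖² = ξ² a`, both coefficients share the factor `(ξ² a^{3/2})⁻¹`.
-/

open Real

theorem hasDerivAt_inv_sqrt_one_add_div {c t : ℝ} (ht : 0 < 1 + t / c) :
    HasDerivAt (fun s => (√(1 + s / c))⁻¹) (-(2 * c * (1 + t / c) * √(1 + t / c))⁻¹) t := by
  have hlin : HasDerivAt (fun s : ℝ => 1 + s / c) c⁻¹ t := by
    simpa using ((hasDerivAt_id t).div_const c).const_add 1
  refine ((hlin.sqrt ht.ne').inv (sqrt_pos.mpr ht).ne').congr_deriv ?_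
  rw [sq_sqrt ht.le]
  field_simp

theorem rpow_three_halves_eq_mul_sqrt {a : ℝ} (ha : 0 < a) : a ^ ((3 : ℝ) / 2) = a * √a := by
  rw [show (3 : ℝ) / 2 = 1 + 1 / 2 by norm_num, rpow_add ha, rpow_one, ← sqrt_eq_rpow]

section RadialScaling

variable {E : Type*} [NormedAddCommGroup E] [InnerProductSpace ℝ E]

theorem hasFDerivAt_comp_norm_sq_smul {φ : ℝ → ℝ} {φ' : ℝ} (v : E)
    (hφ : HasDerivAt φ φ' (‖v‖ ^ 2)) :
    HasFDerivAt (fun w : E => φ (‖w‖ ^ 2) • w)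
      (φ (‖v‖ ^ 2) • ContinuousLinearMap.id ℝ E + (2 * φ') • (innerSL ℝ v).smulRight v) v := by
  have hscalar := hφ.comp_hasFDerivAt v (hasStrictFDerivAt_norm_sq v).hasFDerivAt
  refine (hscalar.smul (hasFDerivAt_id v)).congr_fderiv ?_
  ext x
  simp only [Function.comp_apply, id_eq, add_apply, smul_apply, ContinuousLinearMap.id_apply,
    ContinuousLinearMap.smulRight_apply, coe_innerSL_apply, nsmul_eq_mul, Nat.cast_ofNat,
    smul_eq_mul, smul_smul, add_right_inj]
  ring_nf

theorem hasFDerivAt_inv_sqrt_one_add_norm_sq_div_smul {ξ : ℝ} (hξ : ξ ≠ 0) (v : E) :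
    HasFDerivAt (fun v : E => (√(1 + ‖v‖ ^ 2 / ξ ^ 2))⁻¹ • v)
      ((ξ ^ 2 * (1 + ‖v‖ ^ 2 / ξ ^ 2) ^ ((3 : ℝ) / 2))⁻¹ •
        ((ξ ^ 2 + ‖v‖ ^ 2) • ContinuousLinearMap.id ℝ E - (innerSL ℝ v).smulRight v)) v := by
  have ha_pos : 0 < 1 + ‖v‖ ^ 2 / ξ ^ 2 := by positivity
  have hξa : ξ ^ 2 + ‖v‖ ^ 2 = ξ ^ 2 * (1 + ‖v‖ ^ 2 / ξ ^ 2) := by field_simp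
  refine (hasFDerivAt_comp_norm_sq_smul v
    (hasDerivAt_inv_sqrt_one_add_div ha_pos)).congr_fderiv ?_
  rw [rpow_three_halves_eq_mul_sqrt ha_pos, hξa]
  generalize 1 + ‖v‖ ^ 2 / ξ ^ 2 = a at ha_pos ⊢
  rw [smul_sub, smul_smul, sub_eq_add_neg, ← neg_smul]
  congr 2 <;> field_simp

end RadialScaling

theorem stmt_9 (ξ : ℝ) (hξ : 0 < ξ) :
    ∀ v : EuclideanSpace ℝ (Fin 3),
      HasFDerivAt (fun v : EuclideanSpace ℝ (Fin 3) =>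
          (Real.sqrt (1 + ‖v‖ ^ 2 / ξ ^ 2))⁻¹ • v)
        ((ξ ^ 2 * (1 + ‖v‖ ^ 2 / ξ ^ 2) ^ ((3 : ℝ) / 2))⁻¹ •
          ((ξ ^ 2 + ‖v‖ ^ 2) • ContinuousLinearMap.id ℝ (EuclideanSpace ℝ (Fin 3))
            - (innerSL ℝ v).smulRight v)) v :=
  hasFDerivAt_inv_sqrt_one_add_norm_sq_div_smul hξ.ne'
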